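/- Rényi divergence from a Gibbs measure to the Gaussian adapted to its strong convexity (first ingredient in the proof of Lemma 7.1). Let 𝓛 : ℝ^p → ℝ be differentiable, m-strongly convex, and M-smooth with m ≤ M, with global minimizer θ_opt, and let β > 0. Let P be the probability measure on ℝ^p with density exp(−β𝓛(θ))/Z where Z = ∫_{ℝ^p} exp(−β𝓛(θ)) dθ, and let Q be the probability measure with density (βm/(2π))^{p/2} exp(−(βm/2)‖θ − θ_opt‖²) (the Gaussian N(θ_opt, (βm)^{-1} I_p)). Then for every α > 1, R_α(P, Q) ≤ (pα/(2(α − 1))) · log(M/m). -/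

import Mathlib

/-!
Strong convexity at the minimiser and the descent lemma for the `M`-Lipschitz gradient (which
vanishes at `θopt`) sandwich `𝓛` between `𝓛 θopt + (m/2)‖θ - θopt‖²` and
`𝓛 θopt + (M/2)‖θ - θopt‖²`. Comparing the Gibbs density with Gaussian integrals on both sides
bounds it pointwise by `(M/m)^(p/2)` times the Gaussian density `q`, and any density `P ≤ K q`
satisfies `∫ P^α q^(1-α) ≤ K^α`.
-/

open MeasureTheory Real

noncomputable section

/-- ℝ^p as a Euclidean space. -/
abbrev Eu (p : ℕ) := EuclideanSpace ℝ (Fin p)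

/-- Rényi divergence of order `α` between two probability densities `pd, qd`
with respect to Lebesgue measure on ℝ^p:
`R_α(P, Q) = (α − 1)⁻¹ log ∫ pd(θ)^α qd(θ)^(1−α) dθ`. -/
def renyiDiv {p : ℕ} (α : ℝ) (pd qd : Eu p → ℝ) : ℝ :=
  (α - 1)⁻¹ * Real.log (∫ θ, pd θ ^ α * qd θ ^ (1 - α))

/-- The density of the Gaussian `N(μ, (βm)⁻¹ I_p)` on ℝ^p. -/
def gaussDensity (p : ℕ) (βm : ℝ) (μ : Eu p) (θ : Eu p) : ℝ :=
  (βm / (2 * Real.pi)) ^ ((p : ℝ) / 2) * Real.exp (-(βm / 2) * ‖θ - μ‖ ^ 2)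

open Filter Topology
open scoped NNReal RealInnerProductSpace

theorem StrongConvexOn.add_sq_norm_sub_le_of_isMinOn {E : Type*} [NormedAddCommGroup E]
    [NormedSpace ℝ E] {s : Set E} {m : ℝ} {f : E → ℝ} (hf : StrongConvexOn s m f) {x₀ x : E}
    (hx₀ : x₀ ∈ s) (hx : x ∈ s) (hmin : IsMinOn f s x₀) :
    f x₀ + m / 2 * ‖x - x₀‖ ^ 2 ≤ f x := by
  have hstep : ∀ t ∈ Set.Ioo (0 : ℝ) 1, f x₀ + (1 - t) * (m / 2 * ‖x - x₀‖ ^ 2) ≤ f x := by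
    rintro t ⟨ht₀, ht₁⟩
    have hconv := hf.2 hx hx₀ ht₀.le (sub_nonneg.2 ht₁.le) (add_sub_cancel t 1)
    have hle : f x₀ ≤ f _ := hmin (hf.1 hx hx₀ ht₀.le (sub_nonneg.2 ht₁.le) (add_sub_cancel t 1))
    simp only [smul_eq_mul] at hconv
    refine le_of_mul_le_mul_left ?_ ht₀
    linarith
  have hlim : Tendsto (fun t : ℝ => f x₀ + (1 - t) * (m / 2 * ‖x - x₀‖ ^ 2)) (𝓝[>] 0)
      (𝓝 (f x₀ + (1 - 0) * (m / 2 * ‖x - x₀‖ ^ 2))) :=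
    (Continuous.tendsto (by fun_prop) 0).mono_left nhdsWithin_le_nhds
  simpa using le_of_tendsto hlim (eventually_of_mem (Ioo_mem_nhdsGT zero_lt_one) hstep)

theorem le_add_inner_add_of_lipschitzWith_gradient {E : Type*} [NormedAddCommGroup E]
    [InnerProductSpace ℝ E] [CompleteSpace E] {f : E → ℝ} {g : E → E} {L : ℝ≥0}
    (hf : ∀ x, HasGradientAt f (g x) x) (hg : LipschitzWith L g) (x y : E) :
    f y ≤ f x + ⟪g x, y - x⟫ + L / 2 * ‖y - x‖ ^ 2 := by
  set v := y - x
  let φ : ℝ → ℝ := fun t => f (x + t • v) - t * ⟪g x, v⟫ - L / 2 * t ^ 2 * ‖v‖ ^ 2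
  have hφ : ∀ t, HasDerivAt φ (⟪g (x + t • v), v⟫ - ⟪g x, v⟫ - L * t * ‖v‖ ^ 2) t := by
    intro t
    have hline : HasDerivAt (fun t : ℝ => x + t • v) v t := by
      simpa using ((hasDerivAt_id t).smul_const v).const_add x
    refine ((((hf (x + t • v)).hasFDerivAt.comp_hasDerivAt t hline).sub
      ((hasDerivAt_id t).mul_const ⟪g x, v⟫)).sub
      (((hasDerivAt_pow 2 t).const_mul (L / 2 : ℝ)).mul_const (‖v‖ ^ 2))).congr_deriv ?_
    simp only [InnerProductSpace.toDual_apply_apply]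
    ring
  have hφ_nonpos : ∀ t ∈ interior (Set.Ici (0 : ℝ)),
      ⟪g (x + t • v), v⟫ - ⟪g x, v⟫ - L * t * ‖v‖ ^ 2 ≤ 0 := by
    intro t ht
    rw [interior_Ici] at ht
    rw [sub_nonpos]
    calc ⟪g (x + t • v), v⟫ - ⟪g x, v⟫ = ⟪g (x + t • v) - g x, v⟫ := (inner_sub_left ..).symm
      _ ≤ ‖g (x + t • v) - g x‖ * ‖v‖ := real_inner_le_norm _ _
      _ ≤ L * ‖(x + t • v) - x‖ * ‖v‖ := by gcongr; exact hg.norm_sub_le _ _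
      _ = L * t * ‖v‖ ^ 2 := by
        rw [add_sub_cancel_left, norm_smul, norm_of_nonneg (le_of_lt ht)]; ring
  have hanti : AntitoneOn φ (Set.Ici 0) :=
    antitoneOn_of_hasDerivWithinAt_nonpos (convex_Ici 0)
      (fun t _ => (hφ t).continuousAt.continuousWithinAt) (fun t _ => (hφ t).hasDerivWithinAt)
      hφ_nonpos
  have h₁₀ : φ 1 ≤ φ 0 := hanti (Set.mem_Ici.2 le_rfl) (Set.mem_Ici.2 zero_le_one) zero_le_one
  simp only [φ, v, one_smul, add_sub_cancel, one_mul, one_pow, mul_one, zero_smul, add_zero,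
    zero_mul, sub_zero, ne_eq, OfNat.ofNat_ne_zero, not_false_eq_true, zero_pow, mul_zero] at h₁₀
  linarith

theorem integral_exp_neg_mul_sq_norm_sub {p : ℕ} {b : ℝ} (hb : 0 < b) (μ : Eu p) :
    ∫ θ, rexp (-b * ‖θ - μ‖ ^ 2) = (π / b) ^ ((p : ℝ) / 2) := by
  rw [integral_sub_right_eq_self (fun θ : Eu p => rexp (-b * ‖θ‖ ^ 2)) μ,
    GaussianFourier.integral_rexp_neg_mul_sq_norm hb, finrank_euclideanSpace_fin]

theorem integrable_exp_neg_mul_sq_norm_sub {p : ℕ} {b : ℝ} (hb : 0 < b) (μ : Eu p) :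
    Integrable fun θ => rexp (-b * ‖θ - μ‖ ^ 2) :=
  .of_integral_ne_zero <| by rw [integral_exp_neg_mul_sq_norm_sub hb]; positivity

theorem gaussDensity_nonneg (p : ℕ) {c : ℝ} (hc : 0 ≤ c) (μ θ : Eu p) :
    0 ≤ gaussDensity p c μ θ := by
  unfold gaussDensity; positivity

theorem integral_gaussDensity {p : ℕ} {c : ℝ} (hc : 0 < c) (μ : Eu p) :
    ∫ θ, gaussDensity p c μ θ = 1 := by
  simp only [gaussDensity]
  rw [integral_const_mul, integral_exp_neg_mul_sq_norm_sub (by positivity), ← mul_rpow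
    (by positivity) (by positivity)]
  field_simp
  exact one_rpow _

theorem renyiDiv_le_of_le_mul {p : ℕ} {α K : ℝ} {pd qd : Eu p → ℝ} (hα : 1 < α) (hK : 1 ≤ K)
    (hpd : ∀ θ, 0 ≤ pd θ) (hqd : ∀ θ, 0 ≤ qd θ) (hq : ∫ θ, qd θ = 1)
    (hle : ∀ θ, pd θ ≤ K * qd θ) :
    renyiDiv α pd qd ≤ α / (α - 1) * log K := by
  have hnonneg : ∀ θ, 0 ≤ pd θ ^ α * qd θ ^ (1 - α) := fun θ =>
    mul_nonneg (rpow_nonneg (hpd θ) _) (rpow_nonneg (hqd θ) _)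
  have hpoint : ∀ θ, pd θ ^ α * qd θ ^ (1 - α) ≤ K ^ α * qd θ := fun θ =>
    calc pd θ ^ α * qd θ ^ (1 - α) ≤ (K * qd θ) ^ α * qd θ ^ (1 - α) := by
          gcongr
          exacts [rpow_nonneg (hqd θ) _, hpd θ, hle θ]
      _ = K ^ α * qd θ := by
          rw [mul_rpow (by positivity) (hqd θ), mul_assoc, ← rpow_add' (hqd θ) (by simp),
            add_sub_cancel, rpow_one]
  have hint : ∫ θ, pd θ ^ α * qd θ ^ (1 - α) ≤ K ^ α :=
    calc ∫ θ, pd θ ^ α * qd θ ^ (1 - α) ≤ ∫ θ, K ^ α * qd θ :=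
          integral_mono_of_nonneg (.of_forall hnonneg)
            ((integrable_of_integral_eq_one hq).const_mul _) (.of_forall hpoint)
      _ = K ^ α := by rw [integral_const_mul, hq, mul_one]
  have hlog : log (∫ θ, pd θ ^ α * qd θ ^ (1 - α)) ≤ α * log K := by
    rcases (integral_nonneg (f := fun θ => pd θ ^ α * qd θ ^ (1 - α)) hnonneg).eq_or_lt
      with h | h
    · rw [← h, log_zero]
      exact mul_nonneg (by linarith) (log_nonneg hK)
    · rw [← log_rpow (by linarith)]
      exact log_le_log h hint
  rw [renyiDiv, div_eq_inv_mul, mul_assoc]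
  exact mul_le_mul_of_nonneg_left hlog (inv_nonneg.2 (by linarith))

theorem gibbs_le_rpow_mul_gaussDensity {p : ℕ} {f : Eu p → ℝ} (hf : Measurable f)
    {m M β : ℝ} (hm : 0 < m) (hM : 0 < M) (hβ : 0 < β) {μ : Eu p}
    (hlow : ∀ θ, f μ + m / 2 * ‖θ - μ‖ ^ 2 ≤ f θ) (hup : ∀ θ, f θ ≤ f μ + M / 2 * ‖θ - μ‖ ^ 2)
    (θ : Eu p) :
    rexp (-β * f θ) / ∫ x, rexp (-β * f x) ≤
      (M / m) ^ ((p : ℝ) / 2) * gaussDensity p (β * m) μ θ := by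
  have hexp_le : ∀ θ, rexp (-β * f θ) ≤ rexp (-β * f μ) * rexp (-(β * m / 2) * ‖θ - μ‖ ^ 2) :=
    fun θ => by
      rw [← exp_add, exp_le_exp]
      nlinarith [hlow θ]
  have hle_exp : ∀ θ, rexp (-β * f μ) * rexp (-(β * M / 2) * ‖θ - μ‖ ^ 2) ≤ rexp (-β * f θ) :=
    fun θ => by
      rw [← exp_add, exp_le_exp]
      nlinarith [hup θ]
  have hint : Integrable fun θ => rexp (-β * f θ) :=
    ((integrable_exp_neg_mul_sq_norm_sub (b := β * m / 2) (by positivity) μ).const_mul _).mono'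
      (by fun_prop) (.of_forall fun θ => by rw [norm_of_nonneg (exp_pos _).le]; exact hexp_le θ)
  have hZ : rexp (-β * f μ) * (π / (β * M / 2)) ^ ((p : ℝ) / 2) ≤ ∫ x, rexp (-β * f x) := by
    rw [← integral_exp_neg_mul_sq_norm_sub (by positivity) μ, ← integral_const_mul]
    exact integral_mono ((integrable_exp_neg_mul_sq_norm_sub (by positivity) μ).const_mul _)
      hint hle_exp
  calc rexp (-β * f θ) / ∫ x, rexp (-β * f x)
      ≤ rexp (-β * f μ) * rexp (-(β * m / 2) * ‖θ - μ‖ ^ 2) /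
          (rexp (-β * f μ) * (π / (β * M / 2)) ^ ((p : ℝ) / 2)) :=
        div_le_div₀ (by positivity) (hexp_le θ) (by positivity) hZ
    _ = (M / m) ^ ((p : ℝ) / 2) * gaussDensity p (β * m) μ θ := by
        rw [gaussDensity, ← mul_assoc, ← mul_rpow (by positivity) (by positivity),
          mul_div_mul_left _ _ (exp_pos _).ne', div_eq_inv_mul, ← inv_rpow (by positivity)]
        congr 3
        field_simp

theorem renyi_gibbs_to_gaussian_general
    {p : ℕ}
    (𝓛 : Eu p → ℝ) (g : Eu p → Eu p) (hgrad : ∀ x, HasGradientAt 𝓛 (g x) x)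
    (m M : ℝ) (hm : 0 < m) (hmM : m ≤ M)
    -- `m`-strong convexity: `𝓛 - (m/2)‖·‖²` is convex
    (hsc : ConvexOn ℝ Set.univ (fun x => 𝓛 x - m / 2 * ‖x‖ ^ 2))
    -- `M`-smoothness: the gradient is `M`-Lipschitz
    (hsm : LipschitzWith M.toNNReal g)
    (θopt : Eu p) (hopt : ∀ x, 𝓛 θopt ≤ 𝓛 x)
    (β : ℝ) (hβ : 0 < β)
    (α : ℝ) (hα : 1 < α) :
    renyiDiv α
        (fun θ => Real.exp (-β * 𝓛 θ) / (∫ x, Real.exp (-β * 𝓛 x)))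
        (gaussDensity p (β * m) θopt) ≤
      (p * α / (2 * (α - 1))) * Real.log (M / m) := by
  have hM : 0 < M := hm.trans_le hmM
  have hg₀ : g θopt = 0 := by
    simpa using IsLocalMin.hasFDerivAt_eq_zero (.of_forall hopt) (hgrad θopt).hasFDerivAt
  have hlow (θ : Eu p) : 𝓛 θopt + m / 2 * ‖θ - θopt‖ ^ 2 ≤ 𝓛 θ :=
    (strongConvexOn_iff_convex.2 hsc).add_sq_norm_sub_le_of_isMinOn (Set.mem_univ _)
      (Set.mem_univ _) fun x _ => hopt x
  have hup (θ : Eu p) : 𝓛 θ ≤ 𝓛 θopt + M / 2 * ‖θ - θopt‖ ^ 2 := by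
    simpa [hg₀, hM.le] using le_add_inner_add_of_lipschitzWith_gradient hgrad hsm θopt θ
  have hmeas : Measurable 𝓛 :=
    (continuous_iff_continuousAt.2 fun x => (hgrad x).continuousAt).measurable
  calc _ ≤ α / (α - 1) * log ((M / m) ^ ((p : ℝ) / 2)) :=
        renyiDiv_le_of_le_mul hα (one_le_rpow ((one_le_div hm).2 hmM) (by positivity))
          (fun θ => by positivity) (gaussDensity_nonneg p (by positivity) θopt)
          (integral_gaussDensity (by positivity) θopt)
          (gibbs_le_rpow_mul_gaussDensity hmeas hm hM hβ hlow hup)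
    _ = _ := by
        rw [log_rpow (by positivity)]
        field_simp

/-- Rényi divergence from a Gibbs measure to the Gaussian adapted to
its strong convexity. -/
theorem renyi_gibbs_to_gaussian
    {p : ℕ} (hp : 1 ≤ p)
    (𝓛 : Eu p → ℝ) (g : Eu p → Eu p) (hgrad : ∀ x, HasGradientAt 𝓛 (g x) x)
    (m M : ℝ) (hm : 0 < m) (hmM : m ≤ M)
    -- `m`-strong convexity: `𝓛 - (m/2)‖·‖²` is convex
    (hsc : ConvexOn ℝ Set.univ (fun x => 𝓛 x - m / 2 * ‖x‖ ^ 2))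
    -- `M`-smoothness: the gradient is `M`-Lipschitz
    (hsm : LipschitzWith M.toNNReal g)
    (θopt : Eu p) (hopt : ∀ x, 𝓛 θopt ≤ 𝓛 x)
    (β : ℝ) (hβ : 0 < β)
    (α : ℝ) (hα : 1 < α) :
    renyiDiv α
        (fun θ => Real.exp (-β * 𝓛 θ) / (∫ x, Real.exp (-β * 𝓛 x)))
        (gaussDensity p (β * m) θopt) ≤
      (p * α / (2 * (α - 1))) * Real.log (M / m) :=
  renyi_gibbs_to_gaussian_general 𝓛 g hgrad m M hm hmM hsc hsm θopt hopt β hβ α hα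

end
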